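/- For all k ≥ 3 and r ≥ 3, Λ_r(k) ≤ Λ_{r-1}(k-1), where Λ_r(k) is the minimum of Λ_r(H) over graphs H with clique number r and chromatic number at least k. -/

import Mathlib

/-- `Λ_r(H)`: `(r-1)|V(H)|` minus the maximum, over `r`-cliques `C` of `H`, of the sum of
the degrees of the vertices of `C`. -/
noncomputable def lamGraph (r : ℕ) {n : ℕ} (H : SimpleGraph (Fin n)) : ℕ :=
  (r - 1) * n -
    sSup {d : ℕ | ∃ C : Finset (Fin n), H.IsNClique r C ∧
      d = ∑ v ∈ C, (H.neighborSet v).ncard}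

/-- `Λ_r(k)`: the minimum of `Λ_r(H)` over graphs `H` with clique number exactly `r`
and chromatic number at least `k`. -/
noncomputable def lam (r k : ℕ) : ℕ :=
  sInf {L : ℕ | ∃ n : ℕ, ∃ H : SimpleGraph (Fin n), H.CliqueFree (r + 1) ∧
    (∃ C : Finset (Fin n), H.IsNClique r C) ∧ (k : ℕ∞) ≤ H.chromaticNumber ∧
    L = lamGraph r H}

/-!
Adding a dominating vertex (the cone `H + K₁`) raises both the clique number and the chromatic
number by one. If `H` has no `r`-clique, every `r`-clique of the cone consists of the apex and an
`(r-1)`-clique of `H`; the apex has degree `|V(H)|` and every other vertex gains one neighbour, so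
`(r-1)|V|` and the maximal clique degree sum both grow by `|V(H)| + r - 1`, and
`Λ_r(H + K₁) = Λ_{r-1}(H)`. Applying this to a minimiser for `Λ_{r-1}(k-1)` gives the bound.

A minimiser exists only if some graph qualifies (otherwise `sInf ∅ = 0`): iterated cones over
shift graphs, which are triangle-free and not `m`-colourable on more than `2 ^ m` points, have
clique number `r - 1` and arbitrarily large chromatic number.
-/

open SimpleGraph Finset

lemma Fin.exists_eq_map_castSuccEmb_or_insert_last {n : ℕ} (t : Finset (Fin (n + 1))) :
    ∃ C : Finset (Fin n), t = C.map Fin.castSuccEmb ∨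
      t = insert (Fin.last n) (C.map Fin.castSuccEmb) := by
  refine ⟨univ.filter fun u => u.castSucc ∈ t, ?_⟩
  by_cases hlast : Fin.last n ∈ t
  · right; ext v; induction v using Fin.lastCases <;> simp [hlast, Fin.castSucc_ne_last]
  · left; ext v; induction v using Fin.lastCases <;> simp [hlast, Fin.castSucc_ne_last]

namespace SimpleGraph

section Cone

variable {n m : ℕ} {H : SimpleGraph (Fin n)}

/-- The join `H + K₁`, with the new dominating vertex `Fin.last n`. -/
def cone (H : SimpleGraph (Fin n)) : SimpleGraph (Fin (n + 1)) :=
  H.map Fin.castSuccEmb ⊔ fromRel fun a _ => a = Fin.last n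

@[simp]
lemma cone_adj_castSucc_castSucc {u v : Fin n} :
    (cone H).Adj u.castSucc v.castSucc ↔ H.Adj u v := by
  rw [← Fin.coe_castSuccEmb, cone, sup_adj, map_adj_apply]
  simp [Fin.castSucc_ne_last]

@[simp]
lemma cone_adj_last_castSucc (u : Fin n) : (cone H).Adj (Fin.last n) u.castSucc := by
  simp [cone, (Fin.castSucc_ne_last u).symm]

@[simp]
lemma cone_adj_castSucc_last (u : Fin n) : (cone H).Adj u.castSucc (Fin.last n) :=
  (cone_adj_last_castSucc u).symm

lemma cone_isNClique_map_iff {C : Finset (Fin n)} :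
    (cone H).IsNClique m (C.map Fin.castSuccEmb) ↔ H.IsNClique m C := by
  have hadj : Function.onFun (cone H).Adj Fin.castSuccEmb = H.Adj := by
    ext u v; exact cone_adj_castSucc_castSucc
  rw [isNClique_iff, isNClique_iff, IsClique, coe_map,
    Fin.castSuccEmb.injective.injOn.pairwise_image, hadj, card_map, IsClique]

lemma cone_isNClique_insert_last_iff {C : Finset (Fin n)} :
    (cone H).IsNClique (m + 1) (insert (Fin.last n) (C.map Fin.castSuccEmb)) ↔
      H.IsNClique m C := by
  have hlast : Fin.last n ∉ C.map Fin.castSuccEmb := by simp [Fin.castSucc_ne_last]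
  rw [isNClique_iff, coe_insert, isClique_insert_of_notMem (mod_cast hlast),
    card_insert_of_notMem hlast, ← cone_isNClique_map_iff, isNClique_iff]
  simp

lemma cone_isNClique_succ_iff (hH : H.CliqueFree (m + 1)) {t : Finset (Fin (n + 1))} :
    (cone H).IsNClique (m + 1) t ↔
      ∃ C, H.IsNClique m C ∧ t = insert (Fin.last n) (C.map Fin.castSuccEmb) := by
  refine ⟨fun ht => ?_, fun ⟨C, hC, ht⟩ => ht ▸ cone_isNClique_insert_last_iff.2 hC⟩
  obtain ⟨C, rfl | rfl⟩ := Fin.exists_eq_map_castSuccEmb_or_insert_last t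
  · exact absurd (cone_isNClique_map_iff.1 ht) (hH C)
  · exact ⟨C, cone_isNClique_insert_last_iff.1 ht, rfl⟩

lemma CliqueFree.cone (hH : H.CliqueFree (m + 1)) : (cone H).CliqueFree (m + 2) := by
  intro t ht
  obtain ⟨C, hC, -⟩ := (cone_isNClique_succ_iff (m := m + 1) (hH.mono m.succ.le_succ)).1 ht
  exact hH C hC

lemma ncard_neighborSet_cone_castSucc (u : Fin n) :
    ((cone H).neighborSet u.castSucc).ncard = (H.neighborSet u).ncard + 1 := by
  have : (cone H).neighborSet u.castSucc =
      insert (Fin.last n) (Fin.castSucc '' H.neighborSet u) := by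
    ext v; induction v using Fin.lastCases <;> simp [Fin.castSucc_ne_last]
  rw [this, Set.ncard_insert_of_notMem (by simp [Fin.castSucc_ne_last]),
    Set.ncard_image_of_injective _ (Fin.castSucc_injective n)]

lemma ncard_neighborSet_cone_last : ((cone H).neighborSet (Fin.last n)).ncard = n := by
  have : (cone H).neighborSet (Fin.last n) = {Fin.last n}ᶜ := by
    ext v; induction v using Fin.lastCases <;> simp [Fin.castSucc_ne_last]
  rw [this, Set.ncard_compl, Set.ncard_singleton]
  simp

lemma sum_ncard_neighborSet_cone (C : Finset (Fin n)) :
    ∑ v ∈ insert (Fin.last n) (C.map Fin.castSuccEmb), ((cone H).neighborSet v).ncard =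
      ∑ u ∈ C, (H.neighborSet u).ncard + (n + #C) := by
  rw [sum_insert (by simp [Fin.castSucc_ne_last]), sum_map]
  simp [ncard_neighborSet_cone_castSucc, ncard_neighborSet_cone_last, sum_add_distrib]
  omega

lemma Colorable.of_cone (h : (cone H).Colorable (m + 1)) : H.Colorable m := by
  obtain ⟨c⟩ := h
  let c' : H.Coloring {x // x ≠ c (Fin.last n)} :=
    Coloring.mk (fun u => ⟨c u.castSucc, c.valid (cone_adj_castSucc_last u)⟩)
      fun huv heq => c.valid (cone_adj_castSucc_castSucc.2 huv) (congrArg Subtype.val heq)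
  simpa [Fintype.card_subtype_compl] using c'.colorable

lemma chromaticNumber_add_one_le_cone :
    H.chromaticNumber + 1 ≤ (cone H).chromaticNumber := by
  induction h : (cone H).chromaticNumber using ENat.recTopCoe with
  | top => exact le_top
  | coe k =>
    have hk : (cone H).Colorable k := chromaticNumber_le_iff_colorable.1 h.le
    cases k with
    | zero => simp [colorable_zero_iff] at hk
    | succ m =>
      push_cast
      gcongr
      exact hk.of_cone.chromaticNumber_le

end Cone

def shiftGraph (N : ℕ) : SimpleGraph {p : Fin N × Fin N // p.1 < p.2} where
  Adj a b := a.1.2 = b.1.1 ∨ b.1.2 = a.1.1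
  symm := ⟨fun _ _ => Or.symm⟩
  loopless := ⟨fun a h => by rcases h with h | h <;> exact a.2.ne' h⟩

lemma shiftGraph_cliqueFree_three (N : ℕ) : (shiftGraph N).CliqueFree 3 := by
  intro t ht
  obtain ⟨a, b, c, hab, hac, hbc, -⟩ := is3Clique_iff.1 ht
  have ha := a.2; have hb := b.2; have hc := c.2
  rw [Fin.lt_def] at ha hb hc
  rcases hab with h1 | h1 <;> rcases hac with h2 | h2 <;> rcases hbc with h3 | h3 <;>
    apply_fun Fin.val at h1 h2 h3 <;> omega

lemma shiftGraph_not_colorable {N m : ℕ} (h : 2 ^ m < N) : ¬ (shiftGraph N).Colorable m := by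
  rintro ⟨c⟩
  let out : Fin N → Finset (Fin m) := fun i =>
    univ.filter fun x => ∃ j, ∃ hij : i < j, c ⟨(i, j), hij⟩ = x
  -- if `out i = out j` with `i < j`, the colour of `(i, j)` is also that of some `(j, l)`
  have hout : ∀ ⦃i j⦄, i < j → out i ≠ out j := by
    intro i j hij heq
    have hmem : c ⟨(i, j), hij⟩ ∈ out j := heq ▸ mem_filter.2 ⟨mem_univ _, j, hij, rfl⟩
    obtain ⟨l, hjl, hcol⟩ : ∃ l, ∃ hjl : j < l, c ⟨(j, l), hjl⟩ = c ⟨(i, j), hij⟩ := by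
      simpa [out] using hmem
    exact c.valid (show (shiftGraph N).Adj ⟨(i, j), hij⟩ ⟨(j, l), hjl⟩ from Or.inl rfl) hcol.symm
  have hinj : Function.Injective out := fun i j heq => by
    rcases lt_trichotomy i j with hij | rfl | hji
    · exact absurd heq (hout hij)
    · rfl
    · exact absurd heq.symm (hout hji)
  have := Fintype.card_le_of_injective out hinj
  simp only [Fintype.card_fin, Fintype.card_finset] at this
  omega

lemma exists_cliqueFree_three_not_colorable (m : ℕ) :
    ∃ n, ∃ H : SimpleGraph (Fin n), H.CliqueFree 3 ∧ (∃ C, H.IsNClique 2 C) ∧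
      ¬ H.Colorable m := by
  let G := shiftGraph (2 ^ m + 3)
  let e := G.overFinIso rfl
  have hadj : G.Adj ⟨(⟨0, by simp⟩, ⟨1, by simp⟩), Fin.mk_lt_mk.2 one_pos⟩
      ⟨(⟨1, by simp⟩, ⟨2, by simp⟩), Fin.mk_lt_mk.2 one_lt_two⟩ := Or.inl rfl
  refine ⟨_, G.overFin rfl, (shiftGraph_cliqueFree_three _).comap e.isContained', ?_,
    fun h => shiftGraph_not_colorable (by omega) (h.of_hom e.toHom)⟩
  exact ⟨_, (isNClique_singleton.2 rfl).insert (by simpa using e.map_adj_iff.2 hadj)⟩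

lemma exists_cliqueFree_not_colorable (m : ℕ) {r : ℕ} (hr : 2 ≤ r) :
    ∃ n, ∃ H : SimpleGraph (Fin n), H.CliqueFree (r + 1) ∧ (∃ C, H.IsNClique r C) ∧
      ¬ H.Colorable m := by
  induction r, hr using Nat.le_induction with
  | base => exact exists_cliqueFree_three_not_colorable m
  | succ r _ ih =>
    obtain ⟨n, H, hfree, ⟨C, hC⟩, hcol⟩ := ih
    exact ⟨n + 1, cone H, hfree.cone, ⟨_, cone_isNClique_insert_last_iff.2 hC⟩,
      fun h => hcol (h.mono m.le_succ).of_cone⟩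

end SimpleGraph

lemma lamGraph_cone {n s : ℕ} {H : SimpleGraph (Fin n)} (hfree : H.CliqueFree (s + 1)) (hclique : ∃ C, H.IsNClique s C) :
    lamGraph (s + 1) (cone H) = lamGraph s H := by
  set S := {d : ℕ | ∃ C : Finset (Fin n), H.IsNClique s C ∧
    d = ∑ v ∈ C, (H.neighborSet v).ncard}
  have hS : S.Nonempty := by
    obtain ⟨C, hC⟩ := hclique
    exact ⟨_, C, hC, rfl⟩
  have hbdd : BddAbove S := by
    refine ((Set.finite_range fun C : Finset (Fin n) => ∑ v ∈ C, (H.neighborSet v).ncard).subset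
      ?_).bddAbove
    rintro _ ⟨C, -, rfl⟩
    exact ⟨C, rfl⟩
  -- each `(s + 1)`-clique of the cone is an `s`-clique of `H` plus the apex, which adds `n + s`
  have himage : {d : ℕ | ∃ C : Finset (Fin (n + 1)), (cone H).IsNClique (s + 1) C ∧
      d = ∑ v ∈ C, ((cone H).neighborSet v).ncard} = (· + (n + s)) '' S := by
    ext d
    simp only [cone_isNClique_succ_iff hfree, S, Set.mem_ofPred_eq, Set.mem_image]
    constructor
    · rintro ⟨_, ⟨C, hC, rfl⟩, rfl⟩
      exact ⟨_, ⟨C, hC, rfl⟩, by rw [sum_ncard_neighborSet_cone, hC.card_eq]⟩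
    · rintro ⟨_, ⟨C, hC, rfl⟩, rfl⟩
      exact ⟨_, ⟨C, hC, rfl⟩, by rw [sum_ncard_neighborSet_cone, hC.card_eq]⟩
  rw [lamGraph, lamGraph, himage, ← Monotone.map_csSup_of_continuousAt
    continuous_of_discreteTopology.continuousAt
    (fun _ _ h => Nat.add_le_add_right h (n + s)) hS hbdd]
  change _ = (s - 1) * n - sSup S
  cases s with
  | zero => simp
  | succ t =>
    rw [show (t + 1 + 1 - 1) * (n + 1) = t * n + (n + (t + 1)) by simp; ring,
      Nat.add_sub_cancel]
    omega

lemma lam_le_lamGraph {r k n : ℕ} {H : SimpleGraph (Fin n)} (hfree : H.CliqueFree (r + 1))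
    (hclique : ∃ C, H.IsNClique r C) (hχ : (k : ℕ∞) ≤ H.chromaticNumber) :
    lam r k ≤ lamGraph r H :=
  Nat.sInf_le ⟨n, H, hfree, hclique, hχ, rfl⟩

lemma exists_lamGraph_eq_lam {r k : ℕ}
    (h : ∃ n, ∃ H : SimpleGraph (Fin n), H.CliqueFree (r + 1) ∧ (∃ C, H.IsNClique r C) ∧
      (k : ℕ∞) ≤ H.chromaticNumber) :
    ∃ n, ∃ H : SimpleGraph (Fin n), H.CliqueFree (r + 1) ∧ (∃ C, H.IsNClique r C) ∧
      (k : ℕ∞) ≤ H.chromaticNumber ∧ lamGraph r H = lam r k := by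
  obtain ⟨n, H, hfree, hclique, hχ⟩ := h
  obtain ⟨n', H', hfree', hclique', hχ', hlam⟩ : lam r k ∈ _ :=
    Nat.sInf_mem ⟨_, n, H, hfree, hclique, hχ, rfl⟩
  exact ⟨n', H', hfree', hclique', hχ', hlam.symm⟩

theorem lam_monotone_general (k r : ℕ) (hr : 3 ≤ r) :
    lam r k ≤ lam (r - 1) (k - 1) := by
  obtain ⟨s, rfl⟩ : ∃ s, r = s + 1 := ⟨r - 1, by omega⟩
  rw [Nat.add_sub_cancel]
  obtain ⟨n₀, H₀, hfree₀, hclique₀, hcol₀⟩ :=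
    exists_cliqueFree_not_colorable (k - 1) (by omega : 2 ≤ s)
  obtain ⟨n, H, hfree, hclique, hχ, hlam⟩ := exists_lamGraph_eq_lam
    ⟨n₀, H₀, hfree₀, hclique₀, (not_le.1 (mt chromaticNumber_le_iff_colorable.1 hcol₀)).le⟩
  rw [← hlam, ← lamGraph_cone hfree hclique]
  refine lam_le_lamGraph hfree.cone ?_ ?_
  · obtain ⟨C, hC⟩ := hclique
    exact ⟨_, cone_isNClique_insert_last_iff.2 hC⟩
  · calc (k : ℕ∞) ≤ (k - 1 : ℕ) + 1 := by norm_cast; omega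
      _ ≤ H.chromaticNumber + 1 := by gcongr
      _ ≤ (cone H).chromaticNumber := chromaticNumber_add_one_le_cone

theorem lam_monotone (k r : ℕ) (hk : 3 ≤ k) (hr : 3 ≤ r) :
    lam r k ≤ lam (r - 1) (k - 1) :=
  lam_monotone_general k r hr
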